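/- arXiv:2005.05647 — 2 statements merged into one kernel-verified Lean document; each statement's English description precedes it below -/
import Mathlib

section
/- Let a be a real d×d matrix with symmetric part s = (a + aᵀ)/2 positive definite and skew-symmetric part t = (a - aᵀ)/2, and suppose |Im ⟨a ξ, ξ⟩| ≤ tan(θ₂) · Re ⟨a ξ, ξ⟩ for all ξ ∈ ℂ^d, where θ₂ ∈ [0, π/2). Then ‖s^{-1/2} t s^{-1/2}‖ ≤ tan θ₂, where the norm is the operator norm on ℝ^d. -/
open Matrix Complex

/-- Euclidean operator norm of a real `d×d` matrix. -/
noncomputable def opNorm {d : ℕ} (M : Matrix (Fin d) (Fin d) ℝ) : ℝ :=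
  ‖LinearMap.toContinuousLinearMap (Matrix.toEuclideanLin M)‖

/-- The Hermitian form `⟨a ξ, ξ⟩` of a real matrix `a`, acting ℂ-linearly on `ℂ^d`. -/
noncomputable def hermFormR (d : ℕ) (a : Matrix (Fin d) (Fin d) ℝ) (ξ : Fin d → ℂ) : ℂ :=
  ∑ i, (a.map Complex.ofReal).mulVec ξ i * (starRingEnd ℂ) (ξ i)

/-!
Put `B = r t r`. For real `u, v` take `ξ = r u + i r v`: since `r s r = 1`, the real part of
`⟨a ξ, ξ⟩` is `‖u‖² + ‖v‖²` and its imaginary part is `-2 ⟨B u, v⟩`, so sectoriality gives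
`2 ⟨B u, v⟩ ≤ tan θ₂ (‖u‖² + ‖v‖²)`. Testing this against `v` parallel to `B u` with
`‖v‖ = ‖u‖` yields `‖B u‖ ≤ tan θ₂ ‖u‖`.
-/

lemma ContinuousLinearMap.opNorm_le_of_two_mul_inner_le {E F : Type*}
    [NormedAddCommGroup E] [InnerProductSpace ℝ E] [NormedAddCommGroup F] [InnerProductSpace ℝ F]
    (T : E →L[ℝ] F) {C : ℝ} (hC : 0 ≤ C)
    (h : ∀ u v, 2 * inner ℝ (T u) v ≤ C * (‖u‖ ^ 2 + ‖v‖ ^ 2)) : ‖T‖ ≤ C := by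
  refine T.opNorm_le_bound hC fun u => ?_
  rcases (norm_nonneg (T u)).eq_or_lt with hTu | hTu
  · rw [← hTu]; positivity
  have hu : 0 < ‖u‖ := norm_pos_iff.2 fun hu => by simp [hu] at hTu
  have key : 2 * (‖u‖ * ‖T u‖) ≤ C * (2 * ‖u‖ ^ 2) := by
    have := h u ((‖u‖ / ‖T u‖) • T u)
    rw [inner_smul_right, real_inner_self_eq_norm_sq, norm_smul,
      Real.norm_of_nonneg (by positivity), div_mul_cancel₀ _ hTu.ne'] at this
    calc 2 * (‖u‖ * ‖T u‖) = 2 * (‖u‖ / ‖T u‖ * ‖T u‖ ^ 2) := by field_simp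
      _ ≤ C * (‖u‖ ^ 2 + ‖u‖ ^ 2) := this
      _ = C * (2 * ‖u‖ ^ 2) := by ring
  refine le_of_mul_le_mul_left ?_ hu
  linarith

lemma opNorm_le_of_two_mul_dotProduct_le {d : ℕ} (M : Matrix (Fin d) (Fin d) ℝ) {C : ℝ}
    (hC : 0 ≤ C) (h : ∀ u v, 2 * ((M *ᵥ u) ⬝ᵥ v) ≤ C * (u ⬝ᵥ u + v ⬝ᵥ v)) :
    opNorm M ≤ C := by
  refine ContinuousLinearMap.opNorm_le_of_two_mul_inner_le _ hC fun u v => ?_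
  rw [← real_inner_self_eq_norm_sq, ← real_inner_self_eq_norm_sq, real_inner_comm]
  simpa only [EuclideanSpace.inner_eq_star_dotProduct, star_trivial, toLpLin_apply,
    LinearMap.coe_toContinuousLinearMap'] using h u.ofLp v.ofLp

lemma hermFormR_mk {d : ℕ} (a : Matrix (Fin d) (Fin d) ℝ) (x y : Fin d → ℝ) :
    hermFormR d a (fun i => ⟨x i, y i⟩) =
      ⟨(a *ᵥ x) ⬝ᵥ x + (a *ᵥ y) ⬝ᵥ y, (a *ᵥ y) ⬝ᵥ x - (a *ᵥ x) ⬝ᵥ y⟩ := by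
  apply Complex.ext
  · simp [hermFormR, mulVec, dotProduct, Finset.sum_add_distrib, Finset.sum_mul]
  · simp [hermFormR, mulVec, dotProduct, Finset.sum_add_distrib, Finset.sum_mul]
    ring

namespace Matrix

variable {d : ℕ} (a : Matrix (Fin d) (Fin d) ℝ)

lemma mulVec_dotProduct_comm (x y : Fin d → ℝ) : (a *ᵥ x) ⬝ᵥ y = (aᵀ *ᵥ y) ⬝ᵥ x := by
  rw [dotProduct_comm, dotProduct_mulVec, mulVec_transpose]

lemma mulVec_dotProduct_self_eq_symmPart (x : Fin d → ℝ) :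
    (a *ᵥ x) ⬝ᵥ x = (((1 / 2 : ℝ) • (a + aᵀ)) *ᵥ x) ⬝ᵥ x := by
  rw [smul_mulVec, add_mulVec, smul_dotProduct, add_dotProduct, ← mulVec_dotProduct_comm,
    smul_eq_mul]
  ring

lemma mulVec_dotProduct_sub_eq_skewPart (x y : Fin d → ℝ) :
    (a *ᵥ y) ⬝ᵥ x - (a *ᵥ x) ⬝ᵥ y = -2 * ((((1 / 2 : ℝ) • (a - aᵀ)) *ᵥ x) ⬝ᵥ y) := by
  rw [smul_mulVec, sub_mulVec, smul_dotProduct, sub_dotProduct, mulVec_dotProduct_comm a y,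
    smul_eq_mul]
  ring

lemma mulVec_mulVec_dotProduct_mulVec (M r : Matrix (Fin d) (Fin d) ℝ) (u v : Fin d → ℝ) :
    (M *ᵥ r *ᵥ u) ⬝ᵥ (r *ᵥ v) = ((rᵀ * M * r) *ᵥ u) ⬝ᵥ v := by
  rw [dotProduct_mulVec, ← mulVec_transpose, mulVec_mulVec, mulVec_mulVec, Matrix.mul_assoc]

lemma mul_mul_eq_one_of_mul_self_eq_inv {n R : Type*} [Fintype n] [DecidableEq n]
    [CommRing R] {r s : Matrix n n R} (hr : IsUnit r) (hrr : r * r = s⁻¹) : r * s * r = 1 := by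
  have hs : IsUnit s := isUnit_nonsing_inv_iff.1 (hrr ▸ hr.mul hr)
  have : r * (r * s) = 1 := by
    rw [← Matrix.mul_assoc, hrr, nonsing_inv_mul s ((isUnit_iff_isUnit_det s).1 hs)]
  exact mul_eq_one_comm.1 this

end Matrix

lemma two_mul_dotProduct_congr_skewPart_le {d : ℕ} {a s t r : Matrix (Fin d) (Fin d) ℝ} {C : ℝ}
    (hs : s = (1 / 2 : ℝ) • (a + aᵀ)) (ht : t = (1 / 2 : ℝ) • (a - aᵀ))
    (hsect : ∀ ξ : Fin d → ℂ, |(hermFormR d a ξ).im| ≤ C * (hermFormR d a ξ).re)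
    (hrT : rᵀ = r) (hrsr : r * s * r = 1) (u v : Fin d → ℝ) :
    2 * (((r * t * r) *ᵥ u) ⬝ᵥ v) ≤ C * (u ⬝ᵥ u + v ⬝ᵥ v) := by
  have h := hsect (fun i => ⟨(r *ᵥ u) i, (r *ᵥ v) i⟩)
  rw [hermFormR_mk, mulVec_dotProduct_sub_eq_skewPart, mulVec_dotProduct_self_eq_symmPart a,
    mulVec_dotProduct_self_eq_symmPart a (r *ᵥ v), ← hs, ← ht, mulVec_mulVec_dotProduct_mulVec,
    mulVec_mulVec_dotProduct_mulVec, mulVec_mulVec_dotProduct_mulVec, hrT, hrsr, one_mulVec,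
    one_mulVec] at h
  calc 2 * (((r * t * r) *ᵥ u) ⬝ᵥ v) = -(-2 * (((r * t * r) *ᵥ u) ⬝ᵥ v)) := by ring
    _ ≤ _ := (neg_le_abs _).trans h

theorem stmt3_general (d : ℕ) (a : Matrix (Fin d) (Fin d) ℝ) (θ₂ : ℝ)
    (hθ₂ : θ₂ ∈ Set.Ico 0 (Real.pi / 2))
    (s t : Matrix (Fin d) (Fin d) ℝ)
    (hs : s = (1 / 2 : ℝ) • (a + aᵀ)) (ht : t = (1 / 2 : ℝ) • (a - aᵀ))
    (hsect : ∀ ξ : Fin d → ℂ,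
      |(hermFormR d a ξ).im| ≤ Real.tan θ₂ * (hermFormR d a ξ).re)
    (r : Matrix (Fin d) (Fin d) ℝ) (hr : r.PosDef) (hrr : r * r = s⁻¹) :
    opNorm (r * t * r) ≤ Real.tan θ₂ := by
  have hrT : rᵀ = r := (isHermitian_iff_isSymm.1 hr.isHermitian).eq
  have hrsr : r * s * r = 1 := mul_mul_eq_one_of_mul_self_eq_inv hr.isUnit hrr
  exact opNorm_le_of_two_mul_dotProduct_le _
    (Real.tan_nonneg_of_nonneg_of_le_pi_div_two hθ₂.1 hθ₂.2.le)
    (two_mul_dotProduct_congr_skewPart_le hs ht hsect hrT hrsr)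

/-- if the real matrix `a`, with positive definite symmetric part
`s = (a + aᵀ)/2` and skew part `t = (a - aᵀ)/2`, is sectorial of angle `θ₂`, then
`‖s^{-1/2} t s^{-1/2}‖ ≤ tan θ₂`, where `r = s^{-1/2}` is the positive definite
square root of `s⁻¹`. -/
theorem stmt3 (d : ℕ) (a : Matrix (Fin d) (Fin d) ℝ) (θ₂ : ℝ)
    (hθ₂ : θ₂ ∈ Set.Ico 0 (Real.pi / 2))
    (s t : Matrix (Fin d) (Fin d) ℝ)
    (hs : s = (1 / 2 : ℝ) • (a + aᵀ)) (ht : t = (1 / 2 : ℝ) • (a - aᵀ))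
    (hspd : s.PosDef)
    (hsect : ∀ ξ : Fin d → ℂ,
      |(hermFormR d a ξ).im| ≤ Real.tan θ₂ * (hermFormR d a ξ).re)
    (r : Matrix (Fin d) (Fin d) ℝ) (hr : r.PosDef) (hrr : r * r = s⁻¹) :
    opNorm (r * t * r) ≤ Real.tan θ₂ :=
  stmt3_general d a θ₂ hθ₂ s t hs ht hsect r hr hrr
end

section
/- Let Λ ⊂ ℝ^d be a bounded N-regular set (an N-set), let Ξ ⊆ Λ, and let ρ > 0. Then there exists an N-regular set Ξ• with Ξ ⊆ Ξ• ⊆ Λ such that every point of Ξ• \ Ξ has distance at most ρ to Ξ. -/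
open MeasureTheory Metric
open scoped MeasureTheory

/-- `E` is an `N`-set (Ahlfors `N`-regular): `c r^N ≤ H_N(E ∩ B_r(x)) ≤ c⁻¹ r^N`
for all `x ∈ E` and `0 < r ≤ 1`. -/
def IsNSet {d : ℕ} (N : ℝ) (E : Set (EuclideanSpace ℝ (Fin d))) : Prop :=
  ∃ c > 0, ∀ x ∈ E, ∀ r : ℝ, 0 < r → r ≤ 1 →
    ENNReal.ofReal (c * r ^ N) ≤ μH[N] (E ∩ ball x r) ∧
      μH[N] (E ∩ ball x r) ≤ ENNReal.ofReal (c⁻¹ * r ^ N)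

/-!
Grow `Ξ` inside `Λ` in stages, stage `k + 1` adding the points of `Λ` within `ρ / 2 ^ (k + 1)`
of stage `k`, and let `Ξ•` be the union of the stages. By the geometric series every point of
stage `k` lies within `ρ / 2 ^ j` of stage `j`; in particular `Ξ•` stays within `ρ` of `Ξ`.
Given `x ∈ Ξ•` and a radius `r ≤ 1`, pick `j` with `t = ρ / 2 ^ (j + 1)` comparable to `r`:
then `x` lies within `4 t` of a point `y` of stage `j`, the whole of `Λ ∩ B(y, t)` belongs to
stage `j + 1`, and `B(y, t) ⊆ B(x, r)`. Regularity of `Λ` at `y` gives the lower bound for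
`Ξ•`, and the upper bound is inherited from `Λ ⊇ Ξ•`.
-/

lemma exists_min_le_div_two_pow_succ_le {a s : ℝ} (hs : 0 < s) :
    ∃ j : ℕ, min (a / 2) (s / 2) ≤ a / 2 ^ (j + 1) ∧ a / 2 ^ (j + 1) ≤ s := by
  rcases le_or_gt (a / 2) s with has | hsa
  · exact ⟨0, by simpa using has⟩
  · obtain ⟨n, hn, hn'⟩ :=
      exists_nat_pow_near ((one_le_div hs).2 (show s ≤ a by linarith)) one_lt_two
    rw [le_div_iff₀ hs] at hn
    rw [div_lt_iff₀ hs] at hn'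
    refine ⟨n, min_le_of_right_le ?_, (div_le_iff₀ (by positivity)).2 (by linarith)⟩
    rw [le_div_iff₀ (by positivity), pow_succ]
    linarith

lemma min_rpow_le_rpow {a b x : ℝ} (N : ℝ) (ha : 0 < a) (hax : a ≤ x) (hxb : x ≤ b) :
    min (a ^ N) (b ^ N) ≤ x ^ N := by
  rcases le_total 0 N with hN | hN
  · exact min_le_of_left_le (Real.rpow_le_rpow ha.le hax hN)
  · exact min_le_of_right_le (Real.rpow_le_rpow_of_nonpos (ha.trans_le hax) hxb hN)

theorem IsNSet.of_subset_of_inter_ball_subset {d : ℕ} {N : ℝ}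
    {Λ E : Set (EuclideanSpace ℝ (Fin d))} (hΛ : IsNSet N Λ) (hE : E ⊆ Λ)
    {κ : ℝ} (hκ : 0 < κ)
    (hball : ∀ x ∈ E, ∀ r : ℝ, 0 < r → r ≤ 1 →
      ∃ y ∈ Λ, ∃ s, κ * r ≤ s ∧ s ≤ r ∧ Λ ∩ ball y s ⊆ E ∩ ball x r) :
    IsNSet N E := by
  obtain ⟨c, hc, hreg⟩ := hΛ
  have hc' : 0 < c * min (κ ^ N) 1 := by positivity
  refine ⟨c * min (κ ^ N) 1, hc', fun x hx r hr hr1 => ⟨?_, ?_⟩⟩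
  · obtain ⟨y, hy, s, hκs, hsr, hsub⟩ := hball x hx r hr hr1
    have hs : 0 < s := (mul_pos hκ hr).trans_le hκs
    -- `min (κ ^ N) 1` covers both signs of `N`, i.e. both orders of `(κ r) ^ N` and `r ^ N`.
    have hrpow : min (κ ^ N) 1 * r ^ N ≤ s ^ N := by
      rw [min_mul_of_nonneg _ _ (Real.rpow_nonneg hr.le N), ← Real.mul_rpow hκ.le hr.le, one_mul]
      exact min_rpow_le_rpow N (mul_pos hκ hr) hκs hsr
    calc ENNReal.ofReal (c * min (κ ^ N) 1 * r ^ N)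
        ≤ ENNReal.ofReal (c * s ^ N) := by
          rw [mul_assoc]
          exact ENNReal.ofReal_le_ofReal (mul_le_mul_of_nonneg_left hrpow hc.le)
      _ ≤ μH[N] (Λ ∩ ball y s) := (hreg y hy s hs (hsr.trans hr1)).1
      _ ≤ μH[N] (E ∩ ball x r) := measure_mono hsub
  · have hle : c * min (κ ^ N) 1 ≤ c := mul_le_of_le_one_right hc.le (min_le_right _ _)
    calc μH[N] (E ∩ ball x r) ≤ μH[N] (Λ ∩ ball x r) :=
          measure_mono (Set.inter_subset_inter_left _ hE)
      _ ≤ ENNReal.ofReal (c⁻¹ * r ^ N) := (hreg x (hE hx) r hr hr1).2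
      _ ≤ ENNReal.ofReal ((c * min (κ ^ N) 1)⁻¹ * r ^ N) :=
          ENNReal.ofReal_le_ofReal
            (mul_le_mul_of_nonneg_right (inv_anti₀ hc' hle) (Real.rpow_nonneg hr.le N))

namespace Metric

variable {α : Type*} [PseudoMetricSpace α] {Λ Ξ : Set α} {ρ : ℝ}

variable (Λ Ξ ρ) in
def cthickeningChain : ℕ → Set α
  | 0 => Ξ
  | k + 1 => Λ ∩ cthickening (ρ / 2 ^ (k + 1)) (cthickeningChain k)

lemma cthickeningChain_subset (hΞ : Ξ ⊆ Λ) : ∀ k, cthickeningChain Λ Ξ ρ k ⊆ Λ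
  | 0 => hΞ
  | _ + 1 => Set.inter_subset_left

lemma monotone_cthickeningChain (hΞ : Ξ ⊆ Λ) : Monotone (cthickeningChain Λ Ξ ρ) :=
  monotone_nat_of_le_succ fun k _ hx =>
    ⟨cthickeningChain_subset hΞ k hx, self_subset_cthickening _ hx⟩

lemma cthickeningChain_subset_cthickening_of_le (hρ : 0 ≤ ρ) {j k : ℕ} (hjk : j ≤ k) :
    cthickeningChain Λ Ξ ρ k ⊆
      cthickening (ρ / 2 ^ j - ρ / 2 ^ k) (cthickeningChain Λ Ξ ρ j) := by
  induction k, hjk using Nat.le_induction with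
  | base => rw [sub_self]; exact self_subset_cthickening _
  | succ k hjk ih =>
    have hpow : (2 : ℝ) ^ j ≤ 2 ^ k := pow_le_pow_right₀ one_le_two hjk
    have hgap : 0 ≤ ρ / 2 ^ j - ρ / 2 ^ k :=
      sub_nonneg.2 (div_le_div_of_nonneg_left hρ (by positivity) hpow)
    calc cthickeningChain Λ Ξ ρ (k + 1)
        ⊆ cthickening (ρ / 2 ^ (k + 1)) (cthickening (ρ / 2 ^ j - ρ / 2 ^ k)
            (cthickeningChain Λ Ξ ρ j)) :=
          Set.inter_subset_right.trans (cthickening_subset_of_subset _ ih)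
      _ ⊆ cthickening (ρ / 2 ^ (k + 1) + (ρ / 2 ^ j - ρ / 2 ^ k))
            (cthickeningChain Λ Ξ ρ j) :=
          cthickening_cthickening_subset (by positivity) hgap _
      _ = cthickening (ρ / 2 ^ j - ρ / 2 ^ (k + 1)) (cthickeningChain Λ Ξ ρ j) := by
          congr 1
          rw [pow_succ]
          ring

lemma cthickeningChain_subset_cthickening (hΞ : Ξ ⊆ Λ) (hρ : 0 ≤ ρ) (j k : ℕ) :
    cthickeningChain Λ Ξ ρ k ⊆ cthickening (ρ / 2 ^ j) (cthickeningChain Λ Ξ ρ j) := by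
  rcases le_total j k with hjk | hkj
  · exact (cthickeningChain_subset_cthickening_of_le hρ hjk).trans
      (cthickening_mono (sub_le_self _ (by positivity)) _)
  · exact (monotone_cthickeningChain hΞ hkj).trans (self_subset_cthickening _)

lemma inter_ball_subset_cthickeningChain_succ {j : ℕ} {y : α}
    (hy : y ∈ cthickeningChain Λ Ξ ρ j) :
    Λ ∩ ball y (ρ / 2 ^ (j + 1)) ⊆ cthickeningChain Λ Ξ ρ (j + 1) :=
  Set.inter_subset_inter_right _
    ((ball_subset_thickening hy _).trans (thickening_subset_cthickening _ _))

lemma exists_inter_ball_subset_iUnion_cthickeningChain (hΞ : Ξ ⊆ Λ) (hρ : 0 < ρ) {x : α}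
    (hx : x ∈ ⋃ k, cthickeningChain Λ Ξ ρ k) {r : ℝ} (hr : 0 < r) (hr1 : r ≤ 1) :
    ∃ y ∈ Λ, ∃ s, min (ρ / 2) (1 / 10) * r ≤ s ∧ s ≤ r ∧
      Λ ∩ ball y s ⊆ (⋃ k, cthickeningChain Λ Ξ ρ k) ∩ ball x r := by
  obtain ⟨k, hk⟩ := Set.mem_iUnion.1 hx
  obtain ⟨j, hjlow, hjup⟩ :=
    exists_min_le_div_two_pow_succ_le (a := ρ) (show 0 < r / 5 by positivity)
  set t := ρ / 2 ^ (j + 1) with ht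
  have htpos : 0 < t := by positivity
  have htj : ρ / 2 ^ j = 2 * t := by rw [ht, pow_succ]; field_simp
  have hxj : x ∈ thickening (4 * t) (cthickeningChain Λ Ξ ρ j) := by
    refine cthickening_subset_thickening' (by positivity) ?_ _
      (cthickeningChain_subset_cthickening hΞ hρ.le j k hk)
    linarith
  obtain ⟨y, hy, hxy⟩ := mem_thickening_iff.1 hxj
  refine ⟨y, cthickeningChain_subset hΞ j hy, t, ?_, by linarith, fun z hz =>
    ⟨Set.mem_iUnion.2 ⟨j + 1, inter_ball_subset_cthickeningChain_succ hy hz⟩, ?_⟩⟩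
  · calc min (ρ / 2) (1 / 10) * r = min (ρ / 2 * r) (r / 5 / 2) := by
          rw [min_mul_of_nonneg _ _ hr.le]
          congr 1
          ring
      _ ≤ min (ρ / 2) (r / 5 / 2) :=
          min_le_min_right _ (mul_le_of_le_one_right (by positivity) hr1)
      _ ≤ t := hjlow
  · have hzy : dist z y < t := mem_ball.1 hz.2
    rw [mem_ball]
    linarith [dist_triangle z y x, dist_comm x y]

end Metric

theorem stmt13_general {d : ℕ} (N : ℝ) (Λ Ξ : Set (EuclideanSpace ℝ (Fin d)))
    (hΛ : IsNSet N Λ) (hΞ : Ξ ⊆ Λ)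
    (ρ : ℝ) (hρ : 0 < ρ) :
    ∃ Ξ' : Set (EuclideanSpace ℝ (Fin d)), IsNSet N Ξ' ∧ Ξ ⊆ Ξ' ∧ Ξ' ⊆ Λ ∧
      ∀ x ∈ Ξ' \ Ξ, Metric.infDist x Ξ ≤ ρ := by
  have hsub : (⋃ k, cthickeningChain Λ Ξ ρ k) ⊆ Λ :=
    Set.iUnion_subset (cthickeningChain_subset hΞ)
  refine ⟨⋃ k, cthickeningChain Λ Ξ ρ k,
    hΛ.of_subset_of_inter_ball_subset hsub (by positivity) fun x hx r hr hr1 =>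
      exists_inter_ball_subset_iUnion_cthickeningChain hΞ hρ hx hr hr1,
    Set.subset_iUnion (cthickeningChain Λ Ξ ρ) 0, hsub, fun x hx => ?_⟩
  obtain ⟨k, hk⟩ := Set.mem_iUnion.1 hx.1
  have hxΞ : x ∈ cthickening ρ Ξ := by
    simpa only [pow_zero, div_one, cthickeningChain] using
      cthickeningChain_subset_cthickening hΞ hρ.le 0 k hk
  exact ENNReal.toReal_le_of_le_ofReal hρ.le (mem_cthickening_iff.1 hxΞ)

/-- a subset `Ξ` of a bounded `N`-regular set `Λ` can be enlarged,
within `Λ` and by at most distance `ρ`, to an `N`-regular set `Ξ•`. -/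
theorem stmt13 {d : ℕ} (N : ℝ) (Λ Ξ : Set (EuclideanSpace ℝ (Fin d)))
    (hΛb : Bornology.IsBounded Λ) (hΛ : IsNSet N Λ) (hΞ : Ξ ⊆ Λ)
    (ρ : ℝ) (hρ : 0 < ρ) :
    ∃ Ξ' : Set (EuclideanSpace ℝ (Fin d)), IsNSet N Ξ' ∧ Ξ ⊆ Ξ' ∧ Ξ' ⊆ Λ ∧
      ∀ x ∈ Ξ' \ Ξ, Metric.infDist x Ξ ≤ ρ :=
  stmt13_general N Λ Ξ hΛ hΞ ρ hρ
end
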